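/- arXiv:2004.10329 — 12 statements merged into one kernel-verified Lean document; each statement's English description precedes it below -/
import Mathlib

section
/- Let M be a Puiseux monoid. Then the following are equivalent: (1) M is dense in ℝ≥0; (2) 0 is a limit point of M ∖ {0}; (3) for every generating set S of M, 0 is a limit point of S. -/
open Set

/-- The image of a set of rationals in the reals. -/
def coeR (S : Set ℚ) : Set ℝ := (fun q : ℚ => (q : ℝ)) '' S

/-- A Puiseux monoid: an additive submonoid of ℚ consisting of nonnegative rationals. -/
def IsPuiseux (M : AddSubmonoid ℚ) : Prop := ∀ x ∈ M, 0 ≤ x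

/-- A set of reals is dense in ℝ≥0 if its closure contains all nonnegative reals. -/
def DenseInNonneg (S : Set ℝ) : Prop := Set.Ici (0 : ℝ) ⊆ closure S

/-- α is a limit point of S: every neighborhood of α meets S in a point other than α. -/
def IsLimitPt (α : ℝ) (S : Set ℝ) : Prop := α ∈ closure (S \ {α})

/-- The set of atoms (irreducibles) of an additive submonoid of ℚ. -/
def atoms (M : AddSubmonoid ℚ) : Set ℚ :=
  {a : ℚ | a ∈ M ∧ a ≠ 0 ∧ ∀ u v : ℚ, u ∈ M → v ∈ M → a = u + v → u = 0 ∨ v = 0}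

/-- M is atomic if it is generated by its set of atoms. -/
def IsAtomicMonoid (M : AddSubmonoid ℚ) : Prop := AddSubmonoid.closure (atoms M) = M

/-- S is somewhere dense in ℝ≥0: dense in some nonempty open interval (r,s) with 0 ≤ r. -/
def SomewhereDenseNonneg (S : Set ℝ) : Prop :=
  ∃ r s : ℝ, 0 ≤ r ∧ r < s ∧ Set.Ioo r s ⊆ closure (S ∩ Set.Ioo r s)

/-- S is nowhere dense in ℝ≥0: for all 0 ≤ r < s, S is not dense in (r,s). -/
def NowhereDenseNonneg (S : Set ℝ) : Prop :=
  ∀ r s : ℝ, 0 ≤ r → r < s → ¬ (Set.Ioo r s ⊆ closure (S ∩ Set.Ioo r s))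

/-- S is eventually dense: dense in (r, ∞) for some r ≥ 0. -/
def EventuallyDense (S : Set ℝ) : Prop :=
  ∃ r : ℝ, 0 ≤ r ∧ Set.Ioi r ⊆ closure (S ∩ Set.Ioi r)

/-- The difference group of M, realized as a subset of ℚ. -/
def gp (M : AddSubmonoid ℚ) : Set ℚ := {z : ℚ | ∃ x ∈ M, ∃ y ∈ M, z = x - y}

/-- The root closure of M. -/
def rootClosure (M : AddSubmonoid ℚ) : Set ℚ :=
  {x ∈ gp M | ∃ n : ℕ, 0 < n ∧ (n : ℚ) * x ∈ M}

/-- The conductorSet of M. -/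
def conductorSet (M : AddSubmonoid ℚ) : Set ℚ :=
  {x ∈ gp M | ∀ y ∈ rootClosure M, x + y ∈ M}

/-- M is finitely generated. -/
def IsFG (M : AddSubmonoid ℚ) : Prop :=
  ∃ F : Finset ℚ, AddSubmonoid.closure (F : Set ℚ) = M

/-- M is an increasing monoid: generated by a monotone nondecreasing sequence
of nonnegative rationals. -/
def IsIncreasing (M : AddSubmonoid ℚ) : Prop :=
  ∃ a : ℕ → ℚ, Monotone a ∧ (∀ n, 0 ≤ a n) ∧ AddSubmonoid.closure (Set.range a) = M

/-- α is a limit point of S from the right. -/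
def RightLimitPt (α : ℝ) (S : Set ℝ) : Prop :=
  ∀ ε : ℝ, 0 < ε → (Set.Ioo α (α + ε) ∩ S).Nonempty

/-!
Density of a Puiseux monoid is governed by its small elements: a positive element `q < ε` makes the
multiples `n • q` an `ε`-net of `ℝ≥0`, and conversely density puts positive elements in every
`(0, ε)`. If some generating set had no element in `(0, ε)`, every nonzero element of the monoid
would be a sum of generators each at least `ε`, hence itself at least `ε`.
-/

lemma isLimitPt_diff_singleton (a : ℝ) (S : Set ℝ) : IsLimitPt a (S \ {a}) ↔ IsLimitPt a S := by
  rw [IsLimitPt, IsLimitPt, sdiff_sdiff, union_self]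

lemma isLimitPt_zero_iff {S : Set ℝ} (hS : ∀ x ∈ S, 0 ≤ x) :
    IsLimitPt 0 S ↔ ∀ ε > 0, ∃ x ∈ S, 0 < x ∧ x < ε := by
  simp only [IsLimitPt, Metric.mem_closure_iff, mem_sdiff, mem_singleton_iff, dist_zero_left,
    Real.norm_eq_abs]
  refine forall₂_congr fun ε _ => ⟨?_, ?_⟩
  · rintro ⟨x, ⟨hxS, hx0⟩, hxε⟩
    exact ⟨x, hxS, (hS x hxS).lt_of_ne' hx0, (le_abs_self x).trans_lt hxε⟩
  · rintro ⟨x, hxS, hx0, hxε⟩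
    exact ⟨x, ⟨hxS, hx0.ne'⟩, by rwa [abs_of_pos hx0]⟩

lemma exists_pos_lt_of_Ici_subset_closure {S : Set ℝ} (h : Ici 0 ⊆ closure S) :
    ∀ ε > 0, ∃ x ∈ S, 0 < x ∧ x < ε := by
  intro ε hε
  obtain ⟨x, hxS, hx⟩ := Metric.mem_closure_iff.mp (h (half_pos hε).le) (ε / 2) (half_pos hε)
  rw [Real.dist_eq, abs_lt] at hx
  exact ⟨x, hxS, by linarith, by linarith⟩

lemma Ici_subset_closure_of_exists_pos_lt {A : AddSubmonoid ℝ}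
    (h : ∀ ε > 0, ∃ x ∈ A, 0 < x ∧ x < ε) : Ici 0 ⊆ closure (A : Set ℝ) := by
  intro y hy
  refine Metric.mem_closure_iff.mpr fun ε hε => ?_
  obtain ⟨x, hxA, hx0, hxε⟩ := h ε hε
  set n := ⌊y / x⌋₊
  have hle : n * x ≤ y := (le_div_iff₀ hx0).mp (Nat.floor_le (div_nonneg hy hx0.le))
  have hlt : y < (n + 1) * x := (div_lt_iff₀ hx0).mp (Nat.lt_floor_add_one (y / x))
  refine ⟨n • x, A.nsmul_mem hxA n, ?_⟩
  rw [nsmul_eq_mul, Real.dist_eq, abs_of_nonneg (by linarith)]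
  linarith

lemma denseInNonneg_iff_exists_pos_lt (A : AddSubmonoid ℝ) :
    DenseInNonneg A ↔ ∀ ε > 0, ∃ x ∈ A, 0 < x ∧ x < ε :=
  ⟨exists_pos_lt_of_Ici_subset_closure, Ici_subset_closure_of_exists_pos_lt⟩

lemma AddSubmonoid.eq_zero_or_le_of_mem_closure {α : Type*} [AddCommMonoid α] [PartialOrder α]
    [IsOrderedAddMonoid α] {S : Set α} {ε : α} (hε : 0 ≤ ε) (hS : ∀ s ∈ S, s = 0 ∨ ε ≤ s)
    {x : α} (hx : x ∈ closure S) : x = 0 ∨ ε ≤ x := by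
  induction hx using AddSubmonoid.closure_induction with
  | mem s hs => exact hS s hs
  | zero => exact .inl rfl
  | add x y _ _ hx hy =>
    rcases hx with rfl | hx
    · simpa using hy
    rcases hy with rfl | hy
    · simpa using Or.inr hx
    exact .inr (le_add_of_le_of_nonneg hx (hε.trans hy))

lemma AddSubmonoid.exists_mem_ne_zero_lt_of_mem_closure {α : Type*} [AddCommMonoid α]
    [LinearOrder α] [IsOrderedAddMonoid α] {S : Set α} {ε x : α} (hε : 0 ≤ ε)
    (hx : x ∈ closure S) (hx0 : x ≠ 0) (hxε : x < ε) : ∃ s ∈ S, s ≠ 0 ∧ s < ε := by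
  by_contra! hS
  exact (eq_zero_or_le_of_mem_closure hε (fun s hs => or_iff_not_imp_left.mpr (hS s hs)) hx).elim
    hx0 hxε.not_ge

lemma isLimitPt_zero_of_closure_eq {A : AddSubmonoid ℝ} (hA : ∀ x ∈ A, 0 ≤ x) {T : Set ℝ}
    (hT : AddSubmonoid.closure T = A) (h : IsLimitPt 0 (A : Set ℝ)) : IsLimitPt 0 T := by
  have hTA : T ⊆ A := hT ▸ AddSubmonoid.subset_closure
  rw [isLimitPt_zero_iff hA] at h
  refine (isLimitPt_zero_iff fun x hx => hA x (hTA hx)).mpr fun ε hε => ?_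
  obtain ⟨x, hxA, hx0, hxε⟩ := h ε hε
  obtain ⟨s, hsT, hs0, hsε⟩ :=
    AddSubmonoid.exists_mem_ne_zero_lt_of_mem_closure hε.le (hT ▸ hxA) hx0.ne' hxε
  exact ⟨s, hsT, (hA s (hTA hsT)).lt_of_ne' hs0, hsε⟩

lemma coeR_diff_singleton_zero (S : Set ℚ) : coeR (S \ {0}) = coeR S \ {0} := by
  rw [coeR, image_sdiff Rat.cast_injective, image_singleton, Rat.cast_zero, ← coeR]

/-- For a Puiseux monoid `M`, the following are equivalent:
(1) `M` is dense in ℝ≥0; (2) 0 is a limit point of `M \ {0}`;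
(3) 0 is a limit point of every generating set of `M`. -/
theorem stmt0 (M : AddSubmonoid ℚ) (hM : IsPuiseux M) :
    (DenseInNonneg (coeR (M : Set ℚ)) ↔ IsLimitPt 0 (coeR ((M : Set ℚ) \ {0}))) ∧
    (DenseInNonneg (coeR (M : Set ℚ)) ↔
      ∀ S : Set ℚ, S ⊆ (M : Set ℚ) → AddSubmonoid.closure S = M → IsLimitPt 0 (coeR S)) := by
  set A : AddSubmonoid ℝ := M.map (Rat.castHom ℝ)
  have hA : coeR M = A := rfl
  have hA_nonneg : ∀ x ∈ A, 0 ≤ x := by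
    rintro _ ⟨q, hq, rfl⟩
    exact Rat.cast_nonneg.mpr (hM q hq)
  have h_dense_iff_limit : DenseInNonneg (coeR M) ↔ IsLimitPt 0 (coeR M) := by
    rw [hA, denseInNonneg_iff_exists_pos_lt, isLimitPt_zero_iff hA_nonneg]
    simp only [SetLike.mem_coe]
  rw [coeR_diff_singleton_zero, isLimitPt_diff_singleton]
  refine ⟨h_dense_iff_limit, h_dense_iff_limit.trans ⟨fun h S _ hS => ?_, fun h => ?_⟩⟩
  · refine isLimitPt_zero_of_closure_eq hA_nonneg ?_ h
    change AddSubmonoid.closure (Rat.castHom ℝ '' S) = M.map (Rat.castHom ℝ)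
    rw [← AddMonoidHom.map_mclosure, hS]
  · exact h M subset_rfl M.closure_eq
end

section
/- If a Puiseux monoid M is not dense in ℝ≥0, then M is atomic. -/
open Set

/-!
If the nonzero elements of `M` came arbitrarily close to `0`, the multiples of a tiny element
would approximate every `r ≥ 0`; so a non-dense Puiseux monoid has a gap `ε > 0` above `0`.
Then a nonzero non-atom splits into two nonzero summands, each at least `ε` smaller than it,
and repeated splitting must end in atoms after fewer than `x / ε` rounds.
-/

lemma exists_nat_mul_mem_Ioc_sub_self {x r : ℝ} (hx : 0 < x) (hr : 0 ≤ r) :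
    ∃ n : ℕ, (n : ℝ) * x ∈ Ioc (r - x) r := by
  refine ⟨⌊r / x⌋₊, ?_, (le_div_iff₀ hx).1 (Nat.floor_le (div_nonneg hr hx.le))⟩
  have h := (div_lt_iff₀ hx).1 (Nat.lt_floor_add_one (r / x))
  linarith

lemma denseInNonneg_of_forall_exists_pos_lt {M : AddSubmonoid ℚ}
    (hsmall : ∀ q : ℚ, 0 < q → ∃ x ∈ M, 0 < x ∧ x < q) :
    DenseInNonneg (coeR (M : Set ℚ)) := by
  intro r (hr : 0 ≤ r)
  rw [Metric.mem_closure_iff]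
  intro δ hδ
  obtain ⟨q, hq0, hqδ⟩ := exists_rat_btwn hδ
  obtain ⟨x, hxM, hx0, hxq⟩ := hsmall q (by exact_mod_cast hq0)
  obtain ⟨n, hlo, hhi⟩ := exists_nat_mul_mem_Ioc_sub_self (x := x) (by exact_mod_cast hx0) hr
  refine ⟨((n • x : ℚ) : ℝ), ⟨n • x, M.nsmul_mem hxM n, rfl⟩, ?_⟩
  have hxδ : (x : ℝ) < δ := (Rat.cast_lt.2 hxq).trans hqδ
  rw [nsmul_eq_mul, Rat.cast_mul, Rat.cast_natCast, Real.dist_eq, abs_sub_lt_iff]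
  constructor <;> linarith

lemma exists_pos_le_of_not_denseInNonneg {M : AddSubmonoid ℚ} (hM : IsPuiseux M)
    (h : ¬ DenseInNonneg (coeR (M : Set ℚ))) :
    ∃ ε : ℚ, 0 < ε ∧ ∀ x ∈ M, x ≠ 0 → ε ≤ x := by
  contrapose! h
  refine denseInNonneg_of_forall_exists_pos_lt fun q hq => ?_
  obtain ⟨x, hxM, hx0, hxq⟩ := h q hq
  exact ⟨x, hxM, (hM x hxM).lt_of_ne' hx0, hxq⟩

lemma exists_add_of_notMem_atoms {M : AddSubmonoid ℚ} {x : ℚ} (hx : x ∈ M) (hx0 : x ≠ 0)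
    (hatom : x ∉ atoms M) : ∃ u ∈ M, ∃ v ∈ M, x = u + v ∧ u ≠ 0 ∧ v ≠ 0 := by
  simp only [atoms, mem_ofPred_eq, not_and, not_forall, not_or] at hatom
  obtain ⟨u, v, hu, hv, hxuv, hu0, hv0⟩ := hatom hx hx0
  exact ⟨u, hu, v, hv, hxuv, hu0, hv0⟩

lemma mem_closure_atoms_of_lt_nat_mul {M : AddSubmonoid ℚ} (hM : IsPuiseux M) {ε : ℚ}
    (hε : ∀ x ∈ M, x ≠ 0 → ε ≤ x) (n : ℕ) :
    ∀ x ∈ M, x < n * ε → x ∈ AddSubmonoid.closure (atoms M) := by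
  induction n with
  | zero =>
    intro x hx hxn
    simp only [Nat.cast_zero, zero_mul] at hxn
    exact absurd (hM x hx) hxn.not_ge
  | succ n ih =>
    intro x hx hxn
    by_cases hx0 : x = 0
    · exact hx0 ▸ zero_mem _
    by_cases hatom : x ∈ atoms M
    · exact AddSubmonoid.subset_closure hatom
    obtain ⟨u, hu, v, hv, rfl, hu0, hv0⟩ := exists_add_of_notMem_atoms hx hx0 hatom
    have hεu := hε u hu hu0
    have hεv := hε v hv hv0
    push_cast at hxn
    exact add_mem (ih u hu (by linarith)) (ih v hv (by linarith))

lemma isAtomicMonoid_of_forall_le {M : AddSubmonoid ℚ} (hM : IsPuiseux M) {ε : ℚ} (hε0 : 0 < ε)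
    (hε : ∀ x ∈ M, x ≠ 0 → ε ≤ x) : IsAtomicMonoid M := by
  refine le_antisymm (AddSubmonoid.closure_le.2 fun a ha => ha.1) fun x hx => ?_
  obtain ⟨n, hn⟩ := exists_nat_gt (x / ε)
  exact mem_closure_atoms_of_lt_nat_mul hM hε n x hx ((div_lt_iff₀ hε0).1 hn)

/-- If a Puiseux monoid is not dense in ℝ≥0 then it is atomic. -/
theorem stmt2 (M : AddSubmonoid ℚ) (hM : IsPuiseux M)
    (h : ¬ DenseInNonneg (coeR (M : Set ℚ))) : IsAtomicMonoid M := by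
  obtain ⟨ε, hε0, hε⟩ := exists_pos_le_of_not_denseInNonneg hM h
  exact isAtomicMonoid_of_forall_le hM hε0 hε
end

section
/- Let r, s be real numbers with 0 < r < s < 2r, and let M be the Puiseux monoid generated by the set (r, s) ∩ ℚ of rationals in the open interval (r, s). Then M is atomic and 𝒜(M) = (r, s) ∩ ℚ. -/
open Set

/-
The atoms of a monoid generated by `S` always lie in `S`. Conversely, every nonzero element of
the monoid generated by rationals above `r ≥ 0` exceeds `r`, so a sum of two nonzero elements
exceeds `2r`; hence a generator below `2r` cannot be split, and is an atom.
-/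

theorem atoms_closure_subset (S : Set ℚ) : atoms (AddSubmonoid.closure S) ⊆ S := by
  intro x hx
  induction hx.1 using AddSubmonoid.closure_induction with
  | mem q hq => exact hq
  | zero => exact absurd rfl hx.2.1
  | add a b ha hb iha ihb =>
    rcases hx.2.2 a b ha hb rfl with rfl | rfl
    · simpa using ihb (by simpa using hx)
    · simpa using iha (by simpa using hx)

theorem eq_zero_or_lt_of_mem_closure {S : Set ℚ} {r : ℝ} (hr : 0 ≤ r)
    (hS : ∀ q ∈ S, r < (q : ℝ)) {x : ℚ} (hx : x ∈ AddSubmonoid.closure S) :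
    x = 0 ∨ r < (x : ℝ) := by
  induction hx using AddSubmonoid.closure_induction with
  | mem q hq => exact Or.inr (hS q hq)
  | zero => exact Or.inl rfl
  | add a b _ _ iha ihb =>
    rcases iha with rfl | iha
    · simpa using ihb
    rcases ihb with rfl | ihb
    · simp [iha]
    right
    push_cast
    linarith

theorem mem_atoms_closure_of_lt_two_mul {S : Set ℚ} {r : ℝ} (hr : 0 ≤ r)
    (hS : ∀ q ∈ S, r < (q : ℝ)) {a : ℚ} (ha : a ∈ S) (ha2 : (a : ℝ) < 2 * r) :
    a ∈ atoms (AddSubmonoid.closure S) := by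
  refine ⟨AddSubmonoid.subset_closure ha, ?_, fun u v hu hv huv => ?_⟩
  · rintro rfl
    linarith [hS 0 ha, Rat.cast_zero (α := ℝ)]
  by_contra! h
  have hur := (eq_zero_or_lt_of_mem_closure hr hS hu).resolve_left h.1
  have hvr := (eq_zero_or_lt_of_mem_closure hr hS hv).resolve_left h.2
  have : (a : ℝ) = u + v := by exact_mod_cast huv
  linarith

theorem stmt5_general (r s : ℝ) (hr : 0 < r) (hs2 : s < 2 * r)
    (S : Set ℚ) (hS : S = {q : ℚ | r < (q : ℝ) ∧ (q : ℝ) < s})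
    (M : AddSubmonoid ℚ) (hM : M = AddSubmonoid.closure S) :
    IsAtomicMonoid M ∧ atoms M = S := by
  subst hM
  have hSr : ∀ q ∈ S, r < (q : ℝ) := fun q hq => (hS ▸ hq).1
  have hatoms : atoms (AddSubmonoid.closure S) = S :=
    (atoms_closure_subset S).antisymm fun a ha =>
      mem_atoms_closure_of_lt_two_mul hr.le hSr ha ((hS ▸ ha).2.trans hs2)
  exact ⟨by rw [IsAtomicMonoid, hatoms], hatoms⟩

/-- For reals 0 < r < s < 2r, the Puiseux monoid generated by the
rationals in (r,s) is atomic with set of atoms exactly (r,s) ∩ ℚ. -/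
theorem stmt5 (r s : ℝ) (hr : 0 < r) (hrs : r < s) (hs2 : s < 2 * r)
    (S : Set ℚ) (hS : S = {q : ℚ | r < (q : ℝ) ∧ (q : ℝ) < s})
    (M : AddSubmonoid ℚ) (hM : M = AddSubmonoid.closure S) :
    IsAtomicMonoid M ∧ atoms M = S :=
  stmt5_general r s hr hs2 S hS M hM
end

section
/- There exists an atomic Puiseux monoid M whose set of atoms 𝒜(M) is dense in ℝ≥0. -/
open Set

/-!
Let `pₙ` be the `n`-th prime and `tₙ` an enumeration of `ℚ` listing every rational infinitely
often, and let `M` be generated by `qₙ = ⌊tₙ pₙ⌋ / pₙ + 1 / pₙ²`. The term `1 / pₙ²` makes `qₙ`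
the only generator with negative `pₙ`-adic valuation, so by the ultrametric inequality every
element of `M` with negative `pₙ`-adic valuation is at least `qₙ`; hence `qₙ` is not a sum of two
nonzero elements of `M`, and `M` is generated by atoms. Since `|qₙ - tₙ| ≤ 1 / pₙ` and `pₙ → ∞`,
the `qₙ` are dense in `ℝ≥0`.
-/

open Filter Topology

lemma isPuiseux_closure {S : Set ℚ} (hS : ∀ s ∈ S, 0 ≤ s) :
    IsPuiseux (AddSubmonoid.closure S) :=
  fun _ hx => AddSubmonoid.closure_induction hS le_rfl (fun _ _ _ _ => add_nonneg) hx

lemma isAtomicMonoid_closure {S : Set ℚ} (hS : S ⊆ atoms (AddSubmonoid.closure S)) :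
    IsAtomicMonoid (AddSubmonoid.closure S) :=
  le_antisymm (AddSubmonoid.closure_le.2 fun _ ha => ha.1) (AddSubmonoid.closure_mono hS)

section ValuationAtoms

variable {p : ℕ} [Fact p.Prime]

lemma padicValRat_neg_or_of_add_neg {a b : ℚ} (h : padicValRat p (a + b) < 0) :
    padicValRat p a < 0 ∨ padicValRat p b < 0 := by
  have hab : a + b ≠ 0 := by rintro hab; simp [hab] at h
  have := padicValRat.min_le_padicValRat_add (p := p) hab
  omega

variable {S : Set ℚ} {g : ℚ}

lemma le_of_mem_closure_of_padicValRat_neg (hS : ∀ s ∈ S, 0 ≤ s)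
    (hval : ∀ s ∈ S, s ≠ g → 0 ≤ padicValRat p s) {x : ℚ}
    (hx : x ∈ AddSubmonoid.closure S) (hxv : padicValRat p x < 0) : g ≤ x := by
  induction hx using AddSubmonoid.closure_induction with
  | mem s hs =>
    by_contra hgs
    exact (hval s hs (by rintro rfl; exact hgs le_rfl)).not_gt hxv
  | zero => simp at hxv
  | add a b ha hb iha ihb =>
    rcases padicValRat_neg_or_of_add_neg hxv with h | h
    · linarith [iha h, isPuiseux_closure hS b hb]
    · linarith [ihb h, isPuiseux_closure hS a ha]

lemma mem_atoms_closure (hS : ∀ s ∈ S, 0 ≤ s) (hg : g ∈ S)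
    (hval : ∀ s ∈ S, s ≠ g → 0 ≤ padicValRat p s) (hgv : padicValRat p g < 0) :
    g ∈ atoms (AddSubmonoid.closure S) := by
  refine ⟨AddSubmonoid.subset_closure hg, by rintro rfl; simp at hgv, fun u v hu hv huv => ?_⟩
  have hu0 := isPuiseux_closure hS u hu
  have hv0 := isPuiseux_closure hS v hv
  rcases padicValRat_neg_or_of_add_neg (huv ▸ hgv) with h | h
  · have := le_of_mem_closure_of_padicValRat_neg hS hval hu h
    right; linarith
  · have := le_of_mem_closure_of_padicValRat_neg hS hval hv h
    left; linarith

end ValuationAtoms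

noncomputable def approxPrime (ℓ : ℕ) (t : ℚ) : ℚ :=
  ((⌊t * ℓ⌋₊ * ℓ + 1 : ℕ) : ℚ) / ((ℓ ^ 2 : ℕ) : ℚ)

section ApproxPrime

variable {ℓ : ℕ} {t : ℚ}

lemma approxPrime_pos (hℓ : ℓ ≠ 0) : 0 < approxPrime ℓ t := by
  unfold approxPrime; positivity

lemma padicValRat_approxPrime_self [Fact ℓ.Prime] : padicValRat ℓ (approxPrime ℓ t) = -2 := by
  have hℓ := (Fact.out : ℓ.Prime)
  have hnd : ¬ ℓ ∣ ⌊t * ℓ⌋₊ * ℓ + 1 := by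
    rw [Nat.dvd_add_right (dvd_mul_left ℓ _)]; exact hℓ.not_dvd_one
  rw [approxPrime, padicValRat.div (by positivity) (by simp [hℓ.ne_zero]), padicValRat.of_nat,
    padicValRat.of_nat, padicValNat.eq_zero_of_not_dvd hnd, padicValNat.prime_pow]
  norm_num

lemma padicValRat_approxPrime_nonneg {p : ℕ} [Fact p.Prime] (hℓ : ℓ.Prime) (hpℓ : p ≠ ℓ) :
    0 ≤ padicValRat p (approxPrime ℓ t) := by
  have : Fact ℓ.Prime := ⟨hℓ⟩
  rw [approxPrime, padicValRat.div (by positivity) (by simp [hℓ.ne_zero]), padicValRat.of_nat,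
    padicValRat.of_nat, padicValNat_prime_prime_pow _ hpℓ]
  simp

lemma abs_approxPrime_sub_le (hℓ : ℓ ≠ 0) (ht : 0 ≤ t) :
    |approxPrime ℓ t - t| ≤ 1 / ℓ := by
  have hℓ1 : (1 : ℚ) ≤ ℓ := by exact_mod_cast Nat.one_le_iff_ne_zero.2 hℓ
  have hℓ0 : (0 : ℚ) < ℓ := by linarith
  have hfloor_le : (⌊t * ℓ⌋₊ : ℚ) / ℓ ≤ t :=
    (div_le_iff₀ hℓ0).2 (Nat.floor_le (mul_nonneg ht hℓ0.le))
  have hlt_floor : t < (⌊t * ℓ⌋₊ : ℚ) / ℓ + 1 / ℓ := by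
    rw [← add_div, lt_div_iff₀ hℓ0]; exact Nat.lt_floor_add_one _
  have hsq : 1 / (ℓ : ℚ) ^ 2 ≤ 1 / ℓ :=
    one_div_le_one_div_of_le hℓ0 (by nlinarith)
  have : approxPrime ℓ t = ⌊t * ℓ⌋₊ / ℓ + 1 / ℓ ^ 2 := by
    unfold approxPrime; push_cast; field_simp
  rw [this, abs_le]
  constructor <;> linarith [one_div_pos.2 (pow_pos hℓ0 2)]

end ApproxPrime

lemma Ici_subset_closure_range_of_approx {q t : ℕ → ℚ} {δ : ℕ → ℝ}
    (hδ : Tendsto δ atTop (𝓝 0)) (hq : ∀ n, 0 ≤ t n → |(q n : ℝ) - t n| ≤ δ n)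
    (ht : ∀ r : ℚ, 0 ≤ r → ∃ᶠ n in atTop, t n = r) :
    Ici (0 : ℝ) ⊆ closure (range fun n => (q n : ℝ)) := by
  intro x hx
  rw [Metric.mem_closure_iff]
  intro ε hε
  obtain ⟨r, hxr, hrx⟩ := exists_rat_btwn (by linarith : x < x + ε / 2)
  have hr : (0 : ℚ) ≤ r := by exact_mod_cast hx.out.trans hxr.le
  obtain ⟨n, rfl, hδn⟩ :=
    ((ht r hr).and_eventually (hδ.eventually (gt_mem_nhds (half_pos hε)))).exists
  have hqn := abs_le.1 (hq n hr)
  refine ⟨q n, ⟨n, rfl⟩, ?_⟩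
  rw [Real.dist_eq, abs_lt]
  constructor <;> linarith

lemma frequently_eqv_symm_unpair_eq (r : ℚ) :
    ∃ᶠ n : ℕ in atTop, (Denumerable.eqv ℚ).symm n.unpair.1 = r :=
  frequently_atTop.2 fun N => ⟨Nat.pair (Denumerable.eqv ℚ r) N, Nat.right_le_pair _ _, by simp⟩

noncomputable def denseGen (n : ℕ) : ℚ :=
  approxPrime (Nat.nth Nat.Prime n) ((Denumerable.eqv ℚ).symm n.unpair.1)

lemma denseGen_nonneg : ∀ s ∈ range denseGen, 0 ≤ s := by
  rintro _ ⟨n, rfl⟩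
  exact (approxPrime_pos (Nat.prime_nth_prime n).ne_zero).le

lemma range_denseGen_subset_atoms :
    range denseGen ⊆ atoms (AddSubmonoid.closure (range denseGen)) := by
  rintro _ ⟨n, rfl⟩
  have : Fact (Nat.nth Nat.Prime n).Prime := ⟨Nat.prime_nth_prime n⟩
  refine mem_atoms_closure denseGen_nonneg ⟨n, rfl⟩ ?_
    (by rw [denseGen, padicValRat_approxPrime_self]; norm_num)
  rintro _ ⟨m, rfl⟩ hmn
  refine padicValRat_approxPrime_nonneg (Nat.prime_nth_prime m) fun h => hmn ?_
  rw [Nat.nth_injective Nat.infinite_setOfPred_prime h]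

lemma Ici_subset_closure_range_denseGen :
    Ici (0 : ℝ) ⊆ closure (range fun n => (denseGen n : ℝ)) := by
  refine Ici_subset_closure_range_of_approx
    (tendsto_one_div_atTop_nhds_zero_nat.comp
      (Nat.nth_strictMono Nat.infinite_setOfPred_prime).tendsto_atTop)
    (fun n hn => ?_) fun r _ => frequently_eqv_symm_unpair_eq r
  have h := abs_approxPrime_sub_le (Nat.prime_nth_prime n).ne_zero hn
  rify at h
  exact h

/-- There exists an atomic Puiseux monoid whose set of atoms is dense
in ℝ≥0. -/
theorem stmt7 :
    ∃ M : AddSubmonoid ℚ, IsPuiseux M ∧ IsAtomicMonoid M ∧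
      DenseInNonneg (coeR (atoms M)) := by
  refine ⟨_, isPuiseux_closure denseGen_nonneg,
    isAtomicMonoid_closure range_denseGen_subset_atoms, ?_⟩
  refine Ici_subset_closure_range_denseGen.trans (closure_mono ?_)
  rintro _ ⟨n, rfl⟩
  exact ⟨_, range_denseGen_subset_atoms ⟨n, rfl⟩, rfl⟩
end

section
/- A Puiseux monoid M is eventually dense if and only if it is somewhere dense. That is, there exists r ≥ 0 such that M is dense in the interval (r, ∞) if and only if there exist real numbers 0 ≤ r < s such that M is dense in the open interval (r, s). -/
open Set

/-! The closure of `M` in `ℝ` is again an additive monoid. If it contains an interval `(r, s)`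
with `0 ≤ r`, it contains every dilate `(n r, n s) = n • (r, s)`, and consecutive dilates overlap as
soon as `n (s - r) > r`, so together they cover `(r s / (s - r), ∞)`. -/

theorem IsOpen.subset_closure_inter_iff {X : Type*} [TopologicalSpace X] {U A : Set X}
    (hU : IsOpen U) : U ⊆ closure (A ∩ U) ↔ U ⊆ closure A := by
  refine ⟨fun h => h.trans (closure_mono inter_subset_left), fun h x hx => ?_⟩
  rw [inter_comm]
  exact hU.inter_closure ⟨hx, h hx⟩

lemma Ioo_natCast_mul_subset {S : AddSubmonoid ℝ} {r s : ℝ} (h : Ioo r s ⊆ S) (n : ℕ) :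
    Ioo (n * r) (n * s) ⊆ S := by
  rcases Nat.eq_zero_or_pos n with rfl | hn
  · simp
  intro x ⟨hrx, hxs⟩
  have hn' : (0 : ℝ) < n := Nat.cast_pos.mpr hn
  have hx : x / n ∈ Ioo r s := ⟨(lt_div_iff₀' hn').mpr hrx, (div_lt_iff₀' hn').mpr hxs⟩
  have := S.nsmul_mem (h hx) n
  rwa [nsmul_eq_mul, mul_div_cancel₀ x hn'.ne'] at this

lemma exists_nat_mul_lt_lt_mul {r s x : ℝ} (hr : 0 ≤ r) (hrs : r < s) (hx : r * s / (s - r) < x) :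
    ∃ n : ℕ, n * r < x ∧ x < n * s := by
  have hs : 0 < s := hr.trans_lt hrs
  have hrsx : r * s < x * (s - r) := (div_lt_iff₀ (sub_pos.mpr hrs)).mp hx
  have hx0 : 0 ≤ x := (div_nonneg (mul_nonneg hr hs.le) (sub_pos.mpr hrs).le).trans hx.le
  refine ⟨⌊x / s⌋₊ + 1, ?_, ?_⟩
  · have hfloor : (⌊x / s⌋₊ : ℝ) * s ≤ x :=
      (le_div_iff₀ hs).mp (Nat.floor_le (div_nonneg hx0 hs.le))
    push_cast
    nlinarith [mul_le_mul_of_nonneg_right hfloor hr]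
  · exact_mod_cast (div_lt_iff₀ hs).mp (Nat.lt_floor_add_one (x / s))

lemma AddSubmonoid.Ioi_subset_of_Ioo_subset {S : AddSubmonoid ℝ} {r s : ℝ} (hr : 0 ≤ r)
    (hrs : r < s) (h : Ioo r s ⊆ S) : Ioi (r * s / (s - r)) ⊆ S := fun _ hx =>
  let ⟨n, hnr, hns⟩ := exists_nat_mul_lt_lt_mul hr hrs hx
  Ioo_natCast_mul_subset h n ⟨hnr, hns⟩

lemma closure_coeR (M : AddSubmonoid ℚ) :
    closure (coeR (M : Set ℚ)) = (M.map (Rat.castHom ℝ).toAddMonoidHom).topologicalClosure :=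
  rfl

theorem stmt8_general (M : AddSubmonoid ℚ) :
    EventuallyDense (coeR (M : Set ℚ)) ↔ SomewhereDenseNonneg (coeR (M : Set ℚ)) := by
  unfold EventuallyDense SomewhereDenseNonneg
  simp only [isOpen_Ioi.subset_closure_inter_iff, isOpen_Ioo.subset_closure_inter_iff]
  constructor
  · rintro ⟨r, hr, hdense⟩
    exact ⟨r, r + 1, hr, lt_add_one r, Ioo_subset_Ioi_self.trans hdense⟩
  · rintro ⟨r, s, hr, hrs, hdense⟩
    rw [closure_coeR] at hdense ⊢
    exact ⟨r * s / (s - r), div_nonneg (mul_nonneg hr (hr.trans hrs.le)) (sub_nonneg.mpr hrs.le),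
      AddSubmonoid.Ioi_subset_of_Ioo_subset hr hrs hdense⟩

/-- A Puiseux monoid is eventually dense iff it is somewhere dense. -/
theorem stmt8 (M : AddSubmonoid ℚ) (hM : IsPuiseux M) :
    EventuallyDense (coeR (M : Set ℚ)) ↔ SomewhereDenseNonneg (coeR (M : Set ℚ)) :=
  stmt8_general M
end

section
/- Let M be a Puiseux monoid. If the set of atoms 𝒜(M) is somewhere dense in ℝ≥0, then M is eventually dense. -/
open Set

/-!
The closure of `M` in `ℝ` is again an additive monoid, and it contains an interval `(r, s)`
because the atoms are dense there. Adding the interval to itself, the closure contains every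
`(n r, n s)`; these intervals overlap as soon as `n (s - r) > r`, so from some point on they
cover a whole ray `(t, ∞)`, in which `M` is therefore dense.
-/

section Intervals

variable {K : Type*} [Field K] [LinearOrder K] [IsStrictOrderedRing K]

lemma exists_mem_Ioo_sub_mem_Ioo {a b c d x : K} (hab : a < b) (hcd : c < d)
    (hx : x ∈ Ioo (a + c) (b + d)) :
    ∃ u ∈ Ioo a b, x - u ∈ Ioo c d := by
  obtain ⟨hxl, hxr⟩ := hx
  have hlo : max a (x - d) < min b (x - c) := by
    refine max_lt (lt_min ?_ ?_) (lt_min ?_ ?_) <;> linarith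
  refine ⟨(max a (x - d) + min b (x - c)) / 2, ⟨?_, ?_⟩, ?_, ?_⟩ <;>
    linarith [le_max_left a (x - d), le_max_right a (x - d),
      min_le_left b (x - c), min_le_right b (x - c)]

lemma AddSubmonoid.Ioo_mul_subset {S : AddSubmonoid K} {r s : K} (hrs : r < s)
    (h : Ioo r s ⊆ S) {n : ℕ} (hn : 0 < n) : Ioo (n * r) (n * s) ⊆ S := by
  induction n, hn using Nat.le_induction with
  | base => simpa using h
  | succ n _ ih =>
    intro x hx
    rw [Nat.cast_succ, add_one_mul, add_one_mul] at hx
    obtain ⟨u, hu, hxu⟩ := exists_mem_Ioo_sub_mem_Ioo (by gcongr) hrs hx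
    simpa using S.add_mem (ih hu) (h hxu)

variable [FloorSemiring K]

lemma exists_nat_mem_Ioo_mul {r s x : K} {N : ℕ} (hr : 0 ≤ r) (hs : 0 < s)
    (hN : r < N * (s - r)) (hx : N * r < x) : ∃ n : ℕ, 0 < n ∧ x ∈ Ioo (n * r) (n * s) := by
  have hx0 : 0 ≤ x / s := div_nonneg (by nlinarith [(N.cast_nonneg : (0 : K) ≤ N)]) hs.le
  set k := ⌊x / s⌋₊
  have hks : k * s ≤ x := (le_div_iff₀ hs).1 (Nat.floor_le hx0)
  have hxk : x < (k + 1) * s := (div_lt_iff₀ hs).1 (Nat.lt_floor_add_one _)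
  rcases le_or_gt (k + 1) N with hkN | hNk
  · have hkN' : ((k + 1 : ℕ) : K) ≤ N := by exact_mod_cast hkN
    push_cast at hkN'
    exact ⟨N, by omega, hx, by nlinarith⟩
  · -- `(k + 1) r < k s` because `k ≥ N`, so `x` lies in the `(k + 1)`-st interval
    have hNk' : (N : K) ≤ k := by exact_mod_cast Nat.lt_succ_iff.1 hNk
    refine ⟨k + 1, k.succ_pos, ?_, by push_cast; exact hxk⟩
    push_cast
    nlinarith

lemma AddSubmonoid.exists_Ioi_subset_of_Ioo_subset {S : AddSubmonoid K} {r s : K} (hr : 0 ≤ r)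
    (hrs : r < s) (h : Ioo r s ⊆ S) : ∃ t, 0 ≤ t ∧ Ioi t ⊆ (S : Set K) := by
  obtain ⟨N, hN⟩ : ∃ N : ℕ, r / (s - r) < N :=
    ⟨⌊r / (s - r)⌋₊ + 1, by exact_mod_cast Nat.lt_floor_add_one _⟩
  rw [div_lt_iff₀ (sub_pos.2 hrs)] at hN
  refine ⟨N * r, by positivity, fun x hx => ?_⟩
  obtain ⟨n, hn, hxn⟩ := exists_nat_mem_Ioo_mul hr (hr.trans_lt hrs) hN hx
  exact S.Ioo_mul_subset hrs h hn hxn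

end Intervals

lemma eventuallyDense_of_Ioi_subset_closure {S : Set ℝ} {t : ℝ} (ht : 0 ≤ t)
    (h : Ioi t ⊆ closure S) : EventuallyDense S :=
  ⟨t, ht, fun _ hx => inter_comm S _ ▸ isOpen_Ioi.inter_closure ⟨hx, h hx⟩⟩

theorem stmt9_general (M : AddSubmonoid ℚ)
    (h : SomewhereDenseNonneg (coeR (atoms M))) :
    EventuallyDense (coeR (M : Set ℚ)) := by
  obtain ⟨r, s, hr, hrs, hdense⟩ := h
  let C : AddSubmonoid ℝ := (M.map (Rat.castHom ℝ).toAddMonoidHom).topologicalClosure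
  have hC : (C : Set ℝ) = closure (coeR M) := rfl
  have hatoms : coeR (atoms M) ⊆ coeR M := image_mono fun _ ha => ha.1
  have hIoo : Ioo r s ⊆ C := fun x hx =>
    hC ▸ closure_mono (inter_subset_left.trans hatoms) (hdense hx)
  obtain ⟨t, ht, hray⟩ := C.exists_Ioi_subset_of_Ioo_subset hr hrs hIoo
  exact eventuallyDense_of_Ioi_subset_closure ht (hC ▸ hray)

/-- If the set of atoms of a Puiseux monoid `M` is somewhere dense
in ℝ≥0, then `M` is eventually dense. -/
theorem stmt9 (M : AddSubmonoid ℚ) (hM : IsPuiseux M)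
    (h : SomewhereDenseNonneg (coeR (atoms M))) :
    EventuallyDense (coeR (M : Set ℚ)) :=
  stmt9_general M h
end

section
/- There exists an atomic Puiseux monoid M such that the set of atoms 𝒜(M) is nowhere dense in ℝ≥0, yet M itself is somewhere dense in ℝ≥0 (indeed, M is dense in the interval [2, 4]). -/
open Set

/-!
Let `C ⊆ [0, 1)` be the rationals whose ternary expansion is finite and uses only the digits
`0` and `2`, and let `M` be generated by `A = 1 + C ⊆ [1, 2)`. Every nonzero element of `M` is
at least `1`, so nothing in `A` is a sum of two nonzero elements of `M` and every element of `M`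
outside `A` is: the atoms of `M` are exactly `A`, and `M` is atomic. `A` misses the middle third
`((3k+1)/3ⁿ, (3k+2)/3ⁿ)` of every triadic interval, so it is nowhere dense. On the other hand
`C + C` is dense in `[0, 2]`, because each `u ∈ [0, 2]` can be approximated digit by digit by a sum
of two such expansions; hence `M ⊇ 2 + C + C` is dense in `[2, 4]`.
-/

section Topology

variable {S : Set ℝ}

lemma nowhereDenseNonneg_of_exists_hole
    (h : ∀ r s : ℝ, r < s → ∃ a b, a < b ∧ Ioo a b ⊆ Ioo r s ∧ Disjoint (Ioo a b) S) :
    NowhereDenseNonneg S := by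
  intro r s _ hrs hdense
  obtain ⟨a, b, hab, hsub, hdisj⟩ := h r s hrs
  obtain ⟨x, hx⟩ := nonempty_Ioo.mpr hab
  have hcl : closure (S ∩ Ioo r s) ⊆ (Ioo a b)ᶜ :=
    closure_minimal (fun y hy => disjoint_right.mp hdisj hy.1) isOpen_Ioo.isClosed_compl
  exact hcl (hdense (hsub hx)) hx

lemma Ioo_subset_closure_inter_Ioo {a b : ℝ} (h : Ioo a b ⊆ closure S) :
    Ioo a b ⊆ closure (S ∩ Ioo a b) := fun x hx => by
  simpa only [inter_comm] using isOpen_Ioo.inter_closure ⟨hx, h hx⟩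

lemma Icc_subset_closure_inter_Icc {a b : ℝ} (hab : a < b) (h : Ioo a b ⊆ closure S) :
    Icc a b ⊆ closure (S ∩ Icc a b) :=
  calc Icc a b = closure (Ioo a b) := (closure_Ioo hab.ne).symm
    _ ⊆ closure (S ∩ Ioo a b) := closure_minimal (Ioo_subset_closure_inter_Ioo h) isClosed_closure
    _ ⊆ closure (S ∩ Icc a b) := closure_mono (inter_subset_inter_right _ Ioo_subset_Icc_self)

end Topology

lemma exists_middle_third_subset_Ioo {r s : ℝ} (hrs : r < s) :
    ∃ (n : ℕ) (k : ℤ),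
      Ioo ((3 * k + 1 : ℝ) / 3 ^ (n + 1)) ((3 * k + 2) / 3 ^ (n + 1)) ⊆ Ioo r s := by
  obtain ⟨n, hn⟩ := pow_unbounded_of_one_lt (5 / (s - r)) (by norm_num : (1 : ℝ) < 3)
  set N : ℝ := 3 ^ (n + 1)
  have hN : 0 < N := by positivity
  have hNlarge : 5 ≤ N * (s - r) := by
    have : (3 : ℝ) ^ n ≤ N := pow_le_pow_right₀ (by norm_num) n.le_succ
    rw [div_lt_iff₀ (sub_pos.mpr hrs)] at hn
    nlinarith
  refine ⟨n, ⌊N * r / 3⌋ + 1, Ioo_subset_Ioo ?_ ?_⟩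
  · rw [le_div_iff₀ hN]
    push_cast
    linarith [Int.lt_floor_add_one (N * r / 3)]
  · rw [div_le_iff₀ hN]
    push_cast
    linarith [Int.floor_le (N * r / 3)]

section Monoid

variable {A : Set ℚ} {a : ℚ}

lemma eq_zero_or_le_of_mem_closure (ha : 0 ≤ a) (hA : A ⊆ Ici a) {x : ℚ}
    (hx : x ∈ AddSubmonoid.closure A) : x = 0 ∨ a ≤ x := by
  induction hx using AddSubmonoid.closure_induction with
  | mem x hx => exact Or.inr (hA hx)
  | zero => exact Or.inl rfl
  | add x y _ _ hx hy =>
    rcases hx with rfl | hx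
    · simpa using hy
    rcases hy with rfl | hy
    · simpa using Or.inr hx
    · exact Or.inr (by linarith)

lemma eq_zero_or_exists_add_of_mem_closure {x : ℚ} (hx : x ∈ AddSubmonoid.closure A) :
    x = 0 ∨ ∃ u ∈ A, ∃ v ∈ AddSubmonoid.closure A, x = u + v := by
  induction hx using AddSubmonoid.closure_induction with
  | mem x hx => exact Or.inr ⟨x, hx, 0, zero_mem _, (add_zero x).symm⟩
  | zero => exact Or.inl rfl
  | add x y _ hy hx hy' =>
    rcases hx with rfl | ⟨u, hu, v, hv, rfl⟩
    · simpa using hy'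
    · exact Or.inr ⟨u, hu, v + y, add_mem hv hy, add_assoc u v y⟩

lemma isPuiseux_closure_s10 (hA : A ⊆ Ici 0) : IsPuiseux (AddSubmonoid.closure A) :=
  fun _ hx => (eq_zero_or_le_of_mem_closure le_rfl hA hx).elim ge_of_eq id

lemma atoms_closure_of_subset_Ico (ha : 0 < a) (hA : A ⊆ Ico a (2 * a)) :
    atoms (AddSubmonoid.closure A) = A := by
  have hA' : A ⊆ Ici a := fun x hx => (hA hx).1
  ext x
  constructor
  · rintro ⟨hx, hx0, hirr⟩
    obtain rfl | ⟨u, hu, v, hv, rfl⟩ := eq_zero_or_exists_add_of_mem_closure hx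
    · exact absurd rfl hx0
    obtain hu0 | rfl := hirr u v (AddSubmonoid.subset_closure hu) hv rfl
    · exact absurd ((hA hu).1) (by rw [hu0]; exact not_le.mpr ha)
    · simpa using hu
  · intro hx
    obtain ⟨hax, hx2a⟩ := hA hx
    refine ⟨AddSubmonoid.subset_closure hx, (ha.trans_le hax).ne', fun u v hu hv hxuv => ?_⟩
    rcases eq_zero_or_le_of_mem_closure ha.le hA' hu with hu0 | hu
    · exact Or.inl hu0
    rcases eq_zero_or_le_of_mem_closure ha.le hA' hv with hv0 | hv
    · exact Or.inr hv0
    · linarith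

lemma isAtomicMonoid_closure_of_subset_Ico (ha : 0 < a) (hA : A ⊆ Ico a (2 * a)) :
    IsAtomicMonoid (AddSubmonoid.closure A) := by
  rw [IsAtomicMonoid, atoms_closure_of_subset_Ico ha hA]

end Monoid

inductive IsCantorRat : ℚ → Prop
  | zero : IsCantorRat 0
  | div_three {q : ℚ} : IsCantorRat q → IsCantorRat (q / 3)
  | two_add_div_three {q : ℚ} : IsCantorRat q → IsCantorRat ((2 + q) / 3)

lemma IsCantorRat.mem_Ico {q : ℚ} (hq : IsCantorRat q) : q ∈ Ico 0 1 := by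
  induction hq with
  | zero => norm_num
  | div_three _ ih => constructor <;> linarith [ih.1, ih.2]
  | two_add_div_three _ ih => constructor <;> linarith [ih.1, ih.2]

def AvoidsMiddleThirds (v : ℝ) : Prop := ∀ k : ℤ, v ∉ Ioo (3 * k + 1 : ℝ) (3 * k + 2)

lemma avoidsMiddleThirds_of_mem {v : ℝ} (hv : v ∈ Ico 0 1 ∪ Ico 2 3) :
    AvoidsMiddleThirds v := by
  rintro k ⟨hk1, hk2⟩
  have hk_lt : (k : ℝ) < 1 := by rcases hv with hv | hv <;> linarith [hv.2]
  have hk_gt : (-1 : ℝ) < k := by rcases hv with hv | hv <;> linarith [hv.1]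
  obtain rfl : k = 0 := by
    have : k < 1 := by exact_mod_cast hk_lt
    have : -1 < k := by exact_mod_cast hk_gt
    omega
  norm_num at hk1 hk2
  rcases hv with hv | hv <;> linarith [hv.1, hv.2]

lemma AvoidsMiddleThirds.three_mul_add {v : ℝ} (hv : AvoidsMiddleThirds v) (j : ℤ) :
    AvoidsMiddleThirds (3 * j + v) := by
  rintro k ⟨hk1, hk2⟩
  exact hv (k - j) ⟨by push_cast; linarith, by push_cast; linarith⟩

lemma IsCantorRat.avoidsMiddleThirds {q : ℚ} (hq : IsCantorRat q) :
    ∀ n : ℕ, AvoidsMiddleThirds (3 ^ n * q) := by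
  induction hq with
  | zero => intro n; simpa using avoidsMiddleThirds_of_mem (by norm_num)
  | @div_three q hq ih =>
    have hq0 : (0 : ℝ) ≤ q := by exact_mod_cast hq.mem_Ico.1
    have hq1 : (q : ℝ) < 1 := by exact_mod_cast hq.mem_Ico.2
    rintro (_ | n)
    · refine avoidsMiddleThirds_of_mem (Or.inl ⟨?_, ?_⟩) <;> push_cast <;> linarith
    · convert ih n using 1
      push_cast
      ring
  | @two_add_div_three q hq ih =>
    have hq0 : (0 : ℝ) ≤ q := by exact_mod_cast hq.mem_Ico.1
    have hq1 : (q : ℝ) < 1 := by exact_mod_cast hq.mem_Ico.2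
    rintro (_ | _ | n)
    · refine avoidsMiddleThirds_of_mem (Or.inl ⟨?_, ?_⟩) <;> push_cast <;> linarith
    · refine avoidsMiddleThirds_of_mem (Or.inr ⟨?_, ?_⟩) <;> push_cast <;> linarith
    · convert (ih (n + 1)).three_mul_add (2 * 3 ^ n) using 1
      push_cast
      ring

lemma IsCantorRat.exists_add_mem_Icc (N : ℕ) {u : ℝ} (hu : u ∈ Icc 0 2) :
    ∃ x y : ℚ, IsCantorRat x ∧ IsCantorRat y ∧ ((x + y : ℚ) : ℝ) ∈ Icc (u - 2 / 3 ^ N) u := by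
  induction N generalizing u with
  | zero => exact ⟨0, 0, .zero, .zero, by norm_num; linarith [hu.2], by simpa using hu.1⟩
  | succ N ih =>
    obtain ⟨hu0, hu2⟩ := hu
    have herr : (2 : ℝ) / 3 ^ (N + 1) = 2 / 3 ^ N / 3 := by rw [pow_succ]; ring
    -- the leading digits of `x` and `y` depend on which third of `[0, 2]` contains `u`
    rcases le_or_gt u (2 / 3) with h₁ | h₁
    · obtain ⟨x, y, hx, hy, hxy⟩ := ih (u := 3 * u) ⟨by linarith, by linarith⟩
      refine ⟨x / 3, y / 3, hx.div_three, hy.div_three, ?_, ?_⟩ <;>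
        push_cast at hxy ⊢ <;> linarith [hxy.1, hxy.2]
    rcases le_or_gt u (4 / 3) with h₂ | h₂
    · obtain ⟨x, y, hx, hy, hxy⟩ := ih (u := 3 * u - 2) ⟨by linarith, by linarith⟩
      refine ⟨(2 + x) / 3, y / 3, hx.two_add_div_three, hy.div_three, ?_, ?_⟩ <;>
        push_cast at hxy ⊢ <;> linarith [hxy.1, hxy.2]
    · obtain ⟨x, y, hx, hy, hxy⟩ := ih (u := 3 * u - 4) ⟨by linarith, by linarith⟩
      refine ⟨(2 + x) / 3, (2 + y) / 3, hx.two_add_div_three, hy.two_add_div_three, ?_, ?_⟩ <;>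
        push_cast at hxy ⊢ <;> linarith [hxy.1, hxy.2]

def cantorAtoms : Set ℚ := (1 + ·) '' {q | IsCantorRat q}

def cantorMonoid : AddSubmonoid ℚ := AddSubmonoid.closure cantorAtoms

lemma cantorAtoms_subset_Ico : cantorAtoms ⊆ Ico 1 2 := by
  rintro _ ⟨q, hq, rfl⟩
  constructor <;> linarith [hq.mem_Ico.1, hq.mem_Ico.2]

lemma nowhereDenseNonneg_cantorAtoms : NowhereDenseNonneg (coeR cantorAtoms) := by
  refine nowhereDenseNonneg_of_exists_hole fun r s hrs => ?_
  obtain ⟨n, k, hsub⟩ := exists_middle_third_subset_Ioo hrs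
  refine ⟨_, _, div_lt_div_of_pos_right (by linarith) (by positivity), hsub, disjoint_left.mpr ?_⟩
  rintro _ ⟨hl, hr⟩ ⟨_, ⟨q, hq, rfl⟩, rfl⟩
  have hN : (0 : ℝ) < 3 ^ (n + 1) := by positivity
  rw [div_lt_iff₀ hN] at hl
  rw [lt_div_iff₀ hN] at hr
  have hscale : 3 * ((3 ^ n : ℤ) : ℝ) + 3 ^ (n + 1) * q = ((1 + q : ℚ) : ℝ) * 3 ^ (n + 1) := by
    push_cast; ring
  exact (hq.avoidsMiddleThirds (n + 1)).three_mul_add (3 ^ n) k (hscale ▸ ⟨hl, hr⟩)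

lemma Icc_subset_closure_cantorMonoid : Icc (2 : ℝ) 4 ⊆ closure (coeR cantorMonoid) := by
  intro t ht
  refine Metric.mem_closure_iff.mpr fun ε hε => ?_
  obtain ⟨N, hN⟩ := exists_pow_lt_of_lt_one (half_pos hε) (by norm_num : (1 / 3 : ℝ) < 1)
  have hsmall : (2 : ℝ) / 3 ^ N < ε := by
    rw [div_eq_mul_one_div, ← one_div_pow]
    linarith
  obtain ⟨x, y, hx, hy, hxy⟩ :=
    IsCantorRat.exists_add_mem_Icc N (u := t - 2) ⟨by linarith [ht.1], by linarith [ht.2]⟩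
  have hmem : (1 + x) + (1 + y) ∈ cantorMonoid :=
    add_mem (AddSubmonoid.subset_closure ⟨x, hx, rfl⟩) (AddSubmonoid.subset_closure ⟨y, hy, rfl⟩)
  refine ⟨_, ⟨_, hmem, rfl⟩, ?_⟩
  rw [Real.dist_eq, abs_lt]
  push_cast at hxy ⊢
  constructor <;> linarith [hxy.1, hxy.2]

/-- There is an atomic Puiseux monoid whose set of atoms is nowhere
dense in ℝ≥0, yet the monoid itself is somewhere dense (indeed dense in [2,4]). -/
theorem stmt10 :
    ∃ M : AddSubmonoid ℚ, IsPuiseux M ∧ IsAtomicMonoid M ∧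
      NowhereDenseNonneg (coeR (atoms M)) ∧
      SomewhereDenseNonneg (coeR (M : Set ℚ)) ∧
      Set.Icc (2 : ℝ) 4 ⊆ closure (coeR (M : Set ℚ) ∩ Set.Icc (2 : ℝ) 4) := by
  have hA : cantorAtoms ⊆ Ico 1 (2 * 1) := by simpa using cantorAtoms_subset_Ico
  have hdense : Ioo (2 : ℝ) 4 ⊆ closure (coeR cantorMonoid) :=
    Ioo_subset_Icc_self.trans Icc_subset_closure_cantorMonoid
  refine ⟨cantorMonoid, isPuiseux_closure_s10 fun x hx => zero_le_one.trans (hA hx).1,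
    isAtomicMonoid_closure_of_subset_Ico one_pos hA, ?_,
    ⟨2, 4, by norm_num, by norm_num, Ioo_subset_closure_inter_Ioo hdense⟩,
    Icc_subset_closure_inter_Icc (by norm_num) hdense⟩
  rw [cantorMonoid, atoms_closure_of_subset_Ico one_pos hA]
  exact nowhereDenseNonneg_cantorAtoms
end

section
/- Let M be a Puiseux monoid. Then M is nowhere dense in ℝ≥0 if and only if every generating set of M is nowhere dense in ℝ≥0. Moreover, if M is nowhere dense, then M is atomic and 𝒜(M) is nowhere dense in ℝ≥0. -/
open Set

/-!
If a Puiseux monoid has positive elements below every `ε > 0`, their multiples come within `ε`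
of every nonnegative real, so the monoid is dense in `ℝ≥0`. Hence a nowhere dense Puiseux monoid
has a positive lower bound `ε` on its nonzero elements. Then an element below `n ε` that is not
an atom splits into two nonzero summands below `(n - 1) ε`, so by induction on `n` every element
is a sum of atoms. Nowhere density passes to subsets, in particular to the atoms and to any
generating set.
-/

lemma NowhereDenseNonneg.mono {S T : Set ℝ} (hT : NowhereDenseNonneg T) (h : S ⊆ T) :
    NowhereDenseNonneg S := fun r s hr hrs hdense =>
  hT r s hr hrs (hdense.trans (closure_mono (inter_subset_inter_left _ h)))

lemma NowhereDenseNonneg.not_denseInNonneg {S : Set ℝ} (hS : NowhereDenseNonneg S) :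
    ¬ DenseInNonneg S := fun hdense =>
  hS 0 1 le_rfl one_pos fun _ hx => by
    rw [inter_comm]
    exact isOpen_Ioo.inter_closure ⟨hx, hdense hx.1.le⟩

lemma denseInNonneg_of_exists_pos_lt (M : AddSubmonoid ℚ)
    (hsmall : ∀ ε : ℚ, 0 < ε → ∃ q ∈ M, 0 < q ∧ q < ε) :
    DenseInNonneg (coeR (M : Set ℚ)) := by
  intro x (hx : 0 ≤ x)
  rw [Metric.mem_closure_iff]
  intro δ hδ
  obtain ⟨ε, hε, hεδ⟩ := exists_rat_btwn hδ
  obtain ⟨q, hqM, hq, hqε⟩ := hsmall ε (by exact_mod_cast hε)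
  have hq' : (0 : ℝ) < q := by exact_mod_cast hq
  set n := ⌊x / q⌋₊
  have hnq_le : n * (q : ℝ) ≤ x := (le_div_iff₀ hq').mp (Nat.floor_le (div_nonneg hx hq'.le))
  have hx_lt : x < n * (q : ℝ) + q := by
    have := Nat.lt_floor_add_one (x / q)
    rw [div_lt_iff₀ hq'] at this
    linarith
  refine ⟨n * (q : ℝ), ⟨n * q, ?_, by push_cast; ring⟩, ?_⟩
  · simpa [nsmul_eq_mul] using M.nsmul_mem hqM n
  · rw [Real.dist_eq, abs_of_nonneg (by linarith)]
    have : (q : ℝ) < ε := by exact_mod_cast hqε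
    linarith

lemma exists_pos_le_of_nowhereDenseNonneg {M : AddSubmonoid ℚ} (hM : IsPuiseux M)
    (hnd : NowhereDenseNonneg (coeR (M : Set ℚ))) :
    ∃ ε : ℚ, 0 < ε ∧ ∀ q ∈ M, q ≠ 0 → ε ≤ q := by
  by_contra! hsmall
  refine hnd.not_denseInNonneg (denseInNonneg_of_exists_pos_lt M fun ε hε => ?_)
  obtain ⟨q, hqM, hq0, hqε⟩ := hsmall ε hε
  exact ⟨q, hqM, (hM q hqM).lt_of_ne' hq0, hqε⟩

lemma mem_closure_atoms_of_lt_mul {M : AddSubmonoid ℚ} {ε : ℚ} (hε : 0 < ε)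
    (hbd : ∀ q ∈ M, q ≠ 0 → ε ≤ q) (n : ℕ) {x : ℚ} (hx : x ∈ M) (hxn : x < n * ε) :
    x ∈ AddSubmonoid.closure (atoms M) := by
  induction n generalizing x with
  | zero =>
    have hx0 : x = 0 := by
      by_contra hx0
      have := hbd x hx hx0
      simp only [Nat.cast_zero, zero_mul] at hxn
      linarith
    exact hx0 ▸ zero_mem _
  | succ n ih =>
    by_cases hx0 : x = 0
    · exact hx0 ▸ zero_mem _
    by_cases hat : x ∈ atoms M
    · exact AddSubmonoid.subset_closure hat
    obtain ⟨u, v, hu, hv, rfl, hu0, hv0⟩ :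
        ∃ u v, u ∈ M ∧ v ∈ M ∧ x = u + v ∧ u ≠ 0 ∧ v ≠ 0 := by
      simpa [atoms, hx, hx0] using hat
    have hεu := hbd u hu hu0
    have hεv := hbd v hv hv0
    push_cast at hxn
    exact add_mem (ih hu (by linarith)) (ih hv (by linarith))

lemma isAtomicMonoid_of_forall_le_s11 {M : AddSubmonoid ℚ} {ε : ℚ} (hε : 0 < ε)
    (hbd : ∀ q ∈ M, q ≠ 0 → ε ≤ q) : IsAtomicMonoid M := by
  refine le_antisymm (AddSubmonoid.closure_le.mpr fun a ha => ha.1) fun x hx => ?_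
  obtain ⟨n, hn⟩ := exists_nat_gt (x / ε)
  exact mem_closure_atoms_of_lt_mul hε hbd n hx ((div_lt_iff₀ hε).mp hn)

/-- A Puiseux monoid `M` is nowhere dense in ℝ≥0 iff every
generating set of `M` is nowhere dense in ℝ≥0; moreover, if `M` is nowhere dense
then `M` is atomic and its set of atoms is nowhere dense in ℝ≥0. -/
theorem stmt11 (M : AddSubmonoid ℚ) (hM : IsPuiseux M) :
    (NowhereDenseNonneg (coeR (M : Set ℚ)) ↔
      ∀ S : Set ℚ, S ⊆ (M : Set ℚ) → AddSubmonoid.closure S = M →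
        NowhereDenseNonneg (coeR S)) ∧
    (NowhereDenseNonneg (coeR (M : Set ℚ)) →
      IsAtomicMonoid M ∧ NowhereDenseNonneg (coeR (atoms M))) := by
  refine ⟨⟨fun hnd S hS _ => hnd.mono (image_mono hS),
    fun h => h M subset_rfl (AddSubmonoid.closure_eq M)⟩, fun hnd => ?_⟩
  obtain ⟨ε, hε, hbd⟩ := exists_pos_le_of_nowhereDenseNonneg hM hnd
  exact ⟨isAtomicMonoid_of_forall_le_s11 hε hbd, hnd.mono (image_mono fun a ha => ha.1)⟩
end

section
/- Let M be a Puiseux monoid. Then the root closure M̃ = {x ∈ gp(M) | nx ∈ M for some n ∈ ℕ} is dense in ℝ≥0 if and only if M is not finitely generated. -/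
/-!
The root closure of a Puiseux monoid `M` is the nonnegative part of its difference group
(`p - r ≥ 0` is a nonnegative rational multiple of `p`), so it is dense in `ℝ≥0` exactly when
`gp M` is dense in `ℝ`. A subgroup of `ℝ` is either dense or cyclic. If `M` is generated by
finitely many rationals, it lies in the cyclic group `(1/d)ℤ`, `d` the product of their
denominators; conversely, if `M` lies in a cyclic group `cℤ`, then `M ⊆ ℕ|c|` is the image of a
submonoid of `ℕ`, and those are finitely generated.
-/

open Set

open AddSubgroup in
theorem Rat.mem_zmultiples_inv_of_den_dvd {q : ℚ} {d : ℕ} (hd : d ≠ 0) (h : q.den ∣ d) :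
    q ∈ zmultiples ((d : ℚ)⁻¹) := by
  obtain ⟨e, rfl⟩ := h
  have he : (e : ℚ) ≠ 0 := by exact_mod_cast right_ne_zero_of_mul hd
  refine mem_zmultiples_iff.2 ⟨q.num * e, ?_⟩
  rw [zsmul_eq_mul]
  push_cast
  rw [← Rat.mul_den_eq_num]
  field_simp

theorem denseInNonneg_inter_Ici_iff (H : AddSubgroup ℝ) :
    DenseInNonneg ((H : Set ℝ) ∩ Ici 0) ↔ Dense (H : Set ℝ) := by
  refine ⟨fun h x => ?_, fun hd => ?_⟩
  · rw [← H.topologicalClosure_coe, SetLike.mem_coe]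
    have hclosure : ∀ y, 0 ≤ y → y ∈ H.topologicalClosure := fun y hy =>
      closure_mono inter_subset_left (h hy)
    rcases le_total 0 x with hx | hx
    · exact hclosure x hx
    · simpa using H.topologicalClosure.neg_mem (hclosure (-x) (neg_nonneg.2 hx))
  · calc Ici (0 : ℝ) = closure (Ioi 0) := (closure_Ioi 0).symm
      _ ⊆ closure (Ioi 0 ∩ H) :=
        closure_minimal (hd.open_subset_closure_inter isOpen_Ioi) isClosed_closure
      _ ⊆ closure (H ∩ Ici 0) := closure_mono fun y hy => ⟨hy.2, Ioi_subset_Ici_self hy.1⟩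

namespace PuiseuxMonoid

open AddSubgroup

variable {M : AddSubmonoid ℚ}

variable (M) in
def gpAddSubgroup : AddSubgroup ℚ where
  carrier := gp M
  zero_mem' := ⟨0, M.zero_mem, 0, M.zero_mem, by simp⟩
  add_mem' := by
    rintro _ _ ⟨a, ha, b, hb, rfl⟩ ⟨c, hc, d, hd, rfl⟩
    exact ⟨a + c, M.add_mem ha hc, b + d, M.add_mem hb hd, by ring⟩
  neg_mem' := by
    rintro _ ⟨a, ha, b, hb, rfl⟩
    exact ⟨b, hb, a, ha, by ring⟩

variable (M) in
noncomputable def gpReal : AddSubgroup ℝ :=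
  (gpAddSubgroup M).map (Rat.castHom ℝ).toAddMonoidHom

theorem coe_gpReal : (gpReal M : Set ℝ) = coeR (gp M) := AddSubgroup.coe_map _ _

theorem mem_gpAddSubgroup_of_mem {x : ℚ} (hx : x ∈ M) : x ∈ gpAddSubgroup M :=
  ⟨x, hx, 0, M.zero_mem, by ring⟩

theorem exists_nat_mul_mem_of_le {x p : ℚ} (hp : p ∈ M) (hx : 0 ≤ x) (hxp : x ≤ p) :
    ∃ n : ℕ, 0 < n ∧ (n : ℚ) * x ∈ M := by
  set s := x / p
  have hxs : x = s * p := (div_mul_cancel_of_imp fun h => by linarith).symm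
  have hs : 0 ≤ s := div_nonneg hx (hx.trans hxp)
  refine ⟨s.den, s.den_pos, ?_⟩
  have hnum : (s.den : ℚ) * x = s.num.toNat • p := by
    rw [nsmul_eq_mul, hxs, ← mul_assoc, mul_comm (s.den : ℚ), Rat.mul_den_eq_num,
      ← Int.cast_natCast, Int.toNat_of_nonneg (Rat.num_nonneg.2 hs)]
  rw [hnum]
  exact M.nsmul_mem hp _

theorem rootClosure_eq_gp_inter_Ici (hM : IsPuiseux M) : rootClosure M = gp M ∩ Ici 0 := by
  ext x
  constructor
  · rintro ⟨hgp, n, hn, hnx⟩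
    exact ⟨hgp, (mul_nonneg_iff_of_pos_left (by exact_mod_cast hn)).1 (hM _ hnx)⟩
  · rintro ⟨⟨p, hp, r, hr, rfl⟩, hx⟩
    exact ⟨⟨p, hp, r, hr, rfl⟩,
      exists_nat_mul_mem_of_le hp hx (sub_le_self _ (hM r hr))⟩

theorem coeR_rootClosure (hM : IsPuiseux M) :
    coeR (rootClosure M) = (gpReal M : Set ℝ) ∩ Ici 0 := by
  ext y
  simp only [rootClosure_eq_gp_inter_Ici hM, coe_gpReal, coeR, mem_inter_iff, mem_image, mem_Ici]
  constructor
  · rintro ⟨q, ⟨hq, hq0⟩, rfl⟩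
    exact ⟨⟨q, hq, rfl⟩, by exact_mod_cast hq0⟩
  · rintro ⟨⟨q, hq, rfl⟩, hq0⟩
    exact ⟨q, ⟨hq, by exact_mod_cast hq0⟩, rfl⟩

theorem exists_subset_zmultiples_of_isFG (hFG : IsFG M) :
    ∃ c : ℚ, (M : Set ℚ) ⊆ zmultiples c := by
  obtain ⟨F, rfl⟩ := hFG
  refine ⟨((∏ q ∈ F, q.den : ℕ) : ℚ)⁻¹, ?_⟩
  refine (AddSubmonoid.closure_le (S := (zmultiples _).toAddSubmonoid)).2 fun q hq => ?_
  exact Rat.mem_zmultiples_inv_of_den_dvd (Finset.prod_ne_zero_iff.2 fun q _ => q.den_nz)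
    (Finset.dvd_prod_of_mem Rat.den hq)

theorem isFG_of_subset_zmultiples (hM : IsPuiseux M) {c : ℚ}
    (h : (M : Set ℚ) ⊆ zmultiples c) : IsFG M := by
  have hrange : M ≤ AddMonoidHom.mrange (multiplesHom ℚ |c|) := by
    intro x hx
    obtain ⟨k, rfl⟩ := h hx
    refine ⟨k.natAbs, ?_⟩
    rw [multiplesHom_apply, ← natCast_zsmul, Int.natCast_natAbs, ← abs_zsmul,
      abs_of_nonneg (hM _ hx)]
  show M.FG
  rw [← AddSubmonoid.map_comap_eq_self hrange]
  exact (Nat.addSubmonoid_fg _).map _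

theorem isFG_iff_exists_subset_zmultiples (hM : IsPuiseux M) :
    IsFG M ↔ ∃ c : ℚ, (M : Set ℚ) ⊆ zmultiples c :=
  ⟨exists_subset_zmultiples_of_isFG, fun ⟨_, h⟩ => isFG_of_subset_zmultiples hM h⟩

theorem not_dense_gpReal_of_subset_zmultiples {c : ℚ} (hc : (M : Set ℚ) ⊆ zmultiples c) :
    ¬ Dense (gpReal M : Set ℝ) := by
  intro hd
  have hgp : gpAddSubgroup M ≤ zmultiples c := fun _ ⟨x, hx, y, hy, hxy⟩ =>
    hxy ▸ sub_mem (hc hx) (hc hy)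
  have hle : gpReal M ≤ zmultiples (c : ℝ) :=
    (map_mono hgp).trans_eq (AddMonoidHom.map_zmultiples _ c)
  exact dense_iff_ne_zmultiples.1 (hd.mono hle) c rfl

theorem exists_subset_zmultiples_of_not_dense_gpReal (h : ¬ Dense (gpReal M : Set ℝ)) :
    ∃ c : ℚ, (M : Set ℚ) ⊆ zmultiples c := by
  obtain ⟨a, ha⟩ := (dense_or_cyclic _).resolve_left h
  rw [← zmultiples_eq_closure] at ha
  obtain ⟨c, -, rfl⟩ : a ∈ coeR (gp M) := coe_gpReal (M := M) ▸ ha ▸ mem_zmultiples a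
  refine ⟨c, fun x hx => ?_⟩
  have hxR : (x : ℝ) ∈ gpReal M := ⟨x, mem_gpAddSubgroup_of_mem hx, rfl⟩
  obtain ⟨k, hk⟩ := mem_zmultiples_iff.1 (ha ▸ hxR)
  rw [zsmul_eq_mul] at hk
  beta_reduce at hk
  exact mem_zmultiples_iff.2 ⟨k, by rw [zsmul_eq_mul]; exact_mod_cast hk⟩

theorem dense_gpReal_iff :
    Dense (gpReal M : Set ℝ) ↔ ¬ ∃ c : ℚ, (M : Set ℚ) ⊆ zmultiples c :=
  ⟨fun hd ⟨_, hc⟩ => not_dense_gpReal_of_subset_zmultiples hc hd,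
    not_imp_comm.1 exists_subset_zmultiples_of_not_dense_gpReal⟩

end PuiseuxMonoid

open PuiseuxMonoid in
/-- The root closure of a Puiseux monoid `M` is dense in ℝ≥0 iff
`M` is not finitely generated. -/
theorem stmt13 (M : AddSubmonoid ℚ) (hM : IsPuiseux M) :
    DenseInNonneg (coeR (rootClosure M)) ↔ ¬ IsFG M := by
  rw [coeR_rootClosure hM, denseInNonneg_inter_Ici_iff, dense_gpReal_iff,
    isFG_iff_exists_subset_zmultiples hM]
end

section
/- Let M be a Puiseux monoid whose conductor 𝔠(M) = {x ∈ gp(M) | x + M̃ ⊆ M} is nonempty. Then M is nowhere dense in ℝ≥0 if and only if M is finitely generated. -/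
open Set

/-!
Both conditions say that `M` lies in a cyclic group `ℤ a`. Inside `ℤ a` a Puiseux monoid is a
copy of a submonoid of `ℕ`, hence finitely generated, and it is contained in the closed discrete
set `ℤ a ⊆ ℝ`, hence nowhere dense. Conversely, the subgroup `gp M` of `ℚ` is either cyclic or
dense. If it were dense and `c` lay in the conductor, then `c + g ∈ M` for every `g ∈ gp M` in
`(0, 1)`, since nonnegative elements of `gp M` lie in the root closure; so `M` would be dense in
`(c, c + 1)`.
-/

def gpSubgroup (M : AddSubmonoid ℚ) : AddSubgroup ℚ where
  carrier := gp M
  zero_mem' := ⟨0, zero_mem M, 0, zero_mem M, (sub_zero 0).symm⟩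
  add_mem' := by
    rintro _ _ ⟨a, ha, b, hb, rfl⟩ ⟨u, hu, v, hv, rfl⟩
    exact ⟨a + u, add_mem ha hu, b + v, add_mem hb hv, by ring⟩
  neg_mem' := by
    rintro _ ⟨a, ha, b, hb, rfl⟩
    exact ⟨b, hb, a, ha, neg_sub a b⟩

lemma subset_gp (M : AddSubmonoid ℚ) : (M : Set ℚ) ⊆ gp M :=
  fun x hx => ⟨x, hx, 0, zero_mem M, (sub_zero x).symm⟩

lemma mem_rootClosure_of_nonneg {M : AddSubmonoid ℚ} (hM : IsPuiseux M) {x : ℚ}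
    (hx : x ∈ gp M) (hx0 : 0 ≤ x) : x ∈ rootClosure M := by
  refine ⟨hx, ?_⟩
  obtain ⟨a, ha, b, hb, rfl⟩ := hx
  rcases (hM b hb).eq_or_lt with hb0 | hb0
  · exact ⟨1, one_pos, by simpa [← hb0] using ha⟩
  -- with `(a - b) / b = p / q` in lowest terms, `q • (a - b) = p • b ∈ M`
  set r := (a - b) / b
  have hr : (r.num.toNat : ℚ) = r.num := by
    exact_mod_cast Int.toNat_of_nonneg (Rat.num_nonneg.mpr (by positivity))
  have key : (r.den : ℚ) * (a - b) = r.num.toNat • b := by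
    rw [nsmul_eq_mul, hr, ← Rat.den_mul_eq_num, mul_assoc,
      div_mul_cancel₀ _ hb0.ne']
  exact ⟨r.den, r.den_pos, key ▸ nsmul_mem hb _⟩

lemma subset_zmultiples_of_isFG {M : AddSubmonoid ℚ} (h : IsFG M) :
    ∃ a : ℚ, (M : Set ℚ) ⊆ AddSubgroup.zmultiples a := by
  obtain ⟨F, rfl⟩ := h
  set d := ∏ f ∈ F, f.den
  refine ⟨1 / d, ?_⟩
  show AddSubmonoid.closure _ ≤ (AddSubgroup.zmultiples (1 / d : ℚ)).toAddSubmonoid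
  rw [AddSubmonoid.closure_le]
  intro f hf
  obtain ⟨m, hm⟩ : f.den ∣ d := Finset.dvd_prod_of_mem _ hf
  have hd0 : d ≠ 0 := Finset.prod_ne_zero_iff.mpr fun (f : ℚ) _ => f.den_ne_zero
  have hm0 : (m : ℚ) ≠ 0 := Nat.cast_ne_zero.mpr (right_ne_zero_of_mul (hm ▸ hd0))
  refine ⟨f.num * m, ?_⟩
  change ((f.num * m : ℤ) • (1 / d : ℚ)) = f
  rw [zsmul_eq_mul, hm]
  push_cast
  rw [← Rat.den_mul_eq_num]
  field_simp

lemma isFG_of_subset_zmultiples {M : AddSubmonoid ℚ} (hM : IsPuiseux M) {a : ℚ}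
    (h : (M : Set ℚ) ⊆ AddSubgroup.zmultiples a) : IsFG M := by
  set φ : ℕ →+ ℚ := multiplesHom ℚ |a|
  have hM_le : M ≤ AddMonoidHom.mrange φ := by
    intro x hx
    obtain ⟨k, rfl⟩ := AddSubgroup.mem_zmultiples_iff.mp (h hx)
    refine ⟨k.natAbs, ?_⟩
    rw [← abs_of_nonneg (hM _ hx), abs_zsmul, ← Int.natCast_natAbs, natCast_zsmul]
    rfl
  rw [← AddSubmonoid.map_comap_eq_self hM_le]
  exact (Nat.addSubmonoid_fg _).map φ

lemma nowhereDenseNonneg_of_subset_zmultiples {S : Set ℚ} {a : ℚ}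
    (h : S ⊆ AddSubgroup.zmultiples a) : NowhereDenseNonneg (coeR S) := by
  intro r s _ hrs hdense
  obtain ⟨t, ht, htr, hts⟩ := exists_irrational_btwn hrs
  have hS : coeR S ⊆ AddSubgroup.zmultiples (a : ℝ) := by
    rintro _ ⟨q, hq, rfl⟩
    obtain ⟨k, rfl⟩ := AddSubgroup.mem_zmultiples_iff.mp (h hq)
    exact ⟨k, by simp [zsmul_eq_mul]⟩
  have htS : t ∈ AddSubgroup.zmultiples (a : ℝ) :=
    AddSubgroup.isClosed_of_discrete.closure_subset
      (closure_mono (inter_subset_left.trans hS) (hdense ⟨htr, hts⟩))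
  obtain ⟨k, rfl⟩ := AddSubgroup.mem_zmultiples_iff.mp htS
  exact ht ⟨k • a, by simp [zsmul_eq_mul]⟩

lemma not_nowhereDenseNonneg_of_dense_gp {M : AddSubmonoid ℚ} (hM : IsPuiseux M) {c : ℚ}
    (hc : c ∈ conductorSet M) (hdense : Dense (gp M)) : ¬ NowhereDenseNonneg (coeR M) := by
  have hcM : c ∈ M := by
    simpa using hc.2 0 (mem_rootClosure_of_nonneg hM (gpSubgroup M).zero_mem le_rfl)
  have hc0 : (0 : ℝ) ≤ c := by exact_mod_cast hM c hcM
  have hshift : Dense ((fun x => (c : ℝ) + x) '' coeR (gp M)) :=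
    (Homeomorph.addLeft (c : ℝ)).isDenseEmbedding.dense_image.mpr
      (Rat.isDenseEmbedding_coe_real.dense_image.mpr hdense)
  intro hnd
  refine hnd c (c + 1) hc0 (lt_add_one _)
    ((hshift.open_subset_closure_inter isOpen_Ioo).trans (closure_mono ?_))
  rintro _ ⟨hy, _, ⟨g, hg, rfl⟩, rfl⟩
  have hg0 : (0 : ℝ) ≤ g := ((lt_add_iff_pos_right _).mp hy.1).le
  have hcg : c + g ∈ M := hc.2 g (mem_rootClosure_of_nonneg hM hg (by exact_mod_cast hg0))
  exact ⟨⟨c + g, hcg, by push_cast; rfl⟩, hy⟩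

lemma subset_zmultiples_of_nowhereDenseNonneg {M : AddSubmonoid ℚ} (hM : IsPuiseux M)
    (hc : (conductorSet M).Nonempty) (hnd : NowhereDenseNonneg (coeR M)) :
    ∃ a : ℚ, (M : Set ℚ) ⊆ AddSubgroup.zmultiples a := by
  obtain ⟨c, hc⟩ := hc
  rcases (gpSubgroup M).dense_or_cyclic with hdense | ⟨a, ha⟩
  · exact absurd hnd (not_nowhereDenseNonneg_of_dense_gp hM hc hdense)
  · refine ⟨a, fun x hx => ?_⟩
    rw [AddSubgroup.zmultiples_eq_closure, ← ha]
    exact subset_gp M hx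

/-- A Puiseux monoid with nonempty conductorSet is nowhere dense in
ℝ≥0 iff it is finitely generated. -/
theorem stmt15 (M : AddSubmonoid ℚ) (hM : IsPuiseux M)
    (hc : (conductorSet M).Nonempty) :
    NowhereDenseNonneg (coeR (M : Set ℚ)) ↔ IsFG M := by
  constructor
  · intro hnd
    obtain ⟨a, ha⟩ := subset_zmultiples_of_nowhereDenseNonneg hM hc hnd
    exact isFG_of_subset_zmultiples hM ha
  · intro hfg
    obtain ⟨a, ha⟩ := subset_zmultiples_of_isFG hfg
    exact nowhereDenseNonneg_of_subset_zmultiples ha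
end

section
/- Let M be an increasing Puiseux monoid. Then no real number is a limit point of M from the right. -/
open Set

/-! An increasing Puiseux monoid is generated by a well-ordered set of nonnegative rationals, so
by Higman's lemma (`Set.IsPWO.addSubmonoid_closure`) it is itself well-ordered. Hence for every
real `α` the elements of `M` above `α`, if any, have a least one `m`, and `(α, m)` misses `M`. -/

theorem Set.IsPWO.range_of_monotone {ι α : Type*} [LinearOrder ι] [WellFoundedLT ι] [Preorder α]
    {a : ι → α} (ha : Monotone a) : (range a).IsPWO := by
  simpa only [image_univ] using (IsPWO.of_linearOrder (univ : Set ι)).image_of_monotone ha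

theorem IsIncreasing.isWF {M : AddSubmonoid ℚ} (hM : IsIncreasing M) : (M : Set ℚ).IsWF := by
  obtain ⟨a, ha_mono, ha_nonneg, rfl⟩ := hM
  refine (IsPWO.addSubmonoid_closure ?_ (IsPWO.range_of_monotone ha_mono)).isWF
  rintro _ ⟨n, rfl⟩
  exact ha_nonneg n

theorem not_rightLimitPt_coeR_of_isWF {S : Set ℚ} (hS : S.IsWF) (α : ℝ) :
    ¬ RightLimitPt α (coeR S) := by
  intro hα
  obtain ⟨_, ⟨hαq, -⟩, q, hqS, rfl⟩ := hα 1 one_pos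
  set T := {q ∈ S | α < q}
  have hT_wf : T.IsWF := hS.mono (sep_subset _ _)
  have hT : T.Nonempty := ⟨q, hqS, hαq⟩
  obtain ⟨-, hαm⟩ : hT_wf.min hT ∈ T := hT_wf.min_mem hT
  obtain ⟨_, ⟨hαp, hpm⟩, p, hpS, rfl⟩ := hα (hT_wf.min hT - α) (sub_pos.mpr hαm)
  have hp_lt : p < hT_wf.min hT := by exact_mod_cast (show (p : ℝ) < hT_wf.min hT by linarith)
  exact hT_wf.not_lt_min hT ⟨hpS, hαp⟩ hp_lt

/-- An increasing Puiseux monoid has no limit point from the right. -/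
theorem stmt17 (M : AddSubmonoid ℚ) (hM : IsIncreasing M) :
    ∀ α : ℝ, ¬ RightLimitPt α (coeR (M : Set ℚ)) :=
  not_rightLimitPt_coeR_of_isWF hM.isWF
end

section
/- Every increasing Puiseux monoid M is nowhere dense in ℝ≥0. -/
open Set

open Pointwise Filter Topology

/-! Let `q` be the least positive generator. An element of `M` lying in `[0, s]` is a sum of at
most `⌊s / q⌋` generators, each of them in `[0, s]`. As the generators increase, those in `[0, s]`
lie in a countable compact set `D` (the values `min aₙ s` together with their limit), so
`M ∩ [0, s]` is contained in the countable closed set `⌊s / q⌋ • ({0} ∪ D)`, which contains no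
open interval. -/

theorem IsCompact.nsmul {X : Type*} [TopologicalSpace X] [AddMonoid X] [ContinuousAdd X]
    {s : Set X} (hs : IsCompact s) : ∀ n : ℕ, IsCompact (n • s)
  | 0 => by rw [zero_nsmul]; exact isCompact_singleton
  | n + 1 => by rw [succ_nsmul]; exact (hs.nsmul n).add hs

theorem Set.Countable.nsmul {α : Type*} [AddMonoid α] {s : Set α} (hs : s.Countable) :
    ∀ n : ℕ, (n • s).Countable
  | 0 => by rw [zero_nsmul]; exact Set.countable_singleton 0
  | n + 1 => by rw [succ_nsmul]; exact (hs.nsmul n).image2 hs _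

theorem Monotone.exists_isCompact_countable_superset_range_inter_Iic {α : Type*}
    [ConditionallyCompleteLinearOrder α] [TopologicalSpace α] [OrderTopology α]
    {f : ℕ → α} (hf : Monotone f) (s : α) :
    ∃ D : Set α, IsCompact D ∧ D.Countable ∧ range f ∩ Iic s ⊆ D := by
  set g : ℕ → α := fun n => min (f n) s
  have hg : Monotone g := fun m n hmn => min_le_min_right s (hf hmn)
  have hlim : Tendsto g atTop (𝓝 (⨆ n, g n)) :=
    tendsto_atTop_ciSup hg ⟨s, by rintro _ ⟨n, rfl⟩; exact min_le_right _ _⟩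
  refine ⟨insert (⨆ n, g n) (range g), hlim.isCompact_insert_range,
    (countable_range g).insert _, ?_⟩
  rintro _ ⟨⟨n, rfl⟩, hn⟩
  exact mem_insert_of_mem _ ⟨n, min_eq_left hn⟩

theorem Monotone.exists_pos_forall_eq_zero_or_le {α : Type*} [Semiring α] [LinearOrder α]
    [IsStrictOrderedRing α] {f : ℕ → α} (hf : Monotone f) (hf₀ : ∀ n, 0 ≤ f n) :
    ∃ q : α, 0 < q ∧ ∀ n, f n = 0 ∨ q ≤ f n := by
  by_cases hpos : ∃ n, 0 < f n
  · classical
    refine ⟨f (Nat.find hpos), Nat.find_spec hpos, fun n => ?_⟩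
    rcases (hf₀ n).eq_or_lt with hn | hn
    · exact Or.inl hn.symm
    · exact Or.inr (hf (Nat.find_min' hpos hn))
  · push Not at hpos
    exact ⟨1, one_pos, fun n => Or.inl ((hpos n).antisymm (hf₀ n))⟩

theorem exists_mul_le_and_mem_nsmul_of_mem_closure {α : Type*} [Semiring α] [PartialOrder α]
    [IsOrderedRing α]
    {G : Set α} {q : α} (hq : 0 ≤ q) (hG : ∀ g ∈ G, g = 0 ∨ q ≤ g) {x : α}
    (hx : x ∈ AddSubmonoid.closure G) :
    ∃ k : ℕ, k * q ≤ x ∧ x ∈ k • insert 0 (G ∩ Iic x) := by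
  induction hx using AddSubmonoid.closure_induction with
  | mem g hg =>
    rcases hG g hg with rfl | hqg
    · exact ⟨0, by simp, by simp⟩
    · refine ⟨1, by simpa using hqg, ?_⟩
      rw [one_nsmul]
      exact mem_insert_of_mem _ ⟨hg, le_rfl⟩
  | zero => exact ⟨0, by simp, by simp⟩
  | add u v _ _ hu hv =>
    obtain ⟨j, hju, hu⟩ := hu
    obtain ⟨k, hkv, hv⟩ := hv
    have hu₀ : 0 ≤ u := le_trans (by positivity) hju
    have hv₀ : 0 ≤ v := le_trans (by positivity) hkv
    refine ⟨j + k, by push_cast; rw [add_mul]; exact add_le_add hju hkv, ?_⟩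
    rw [add_nsmul]
    refine Set.add_mem_add (Set.nsmul_subset_nsmul_left ?_ hu)
      (Set.nsmul_subset_nsmul_left ?_ hv)
    all_goals refine insert_subset_insert (inter_subset_inter_right _ (Iic_subset_Iic.2 ?_))
    exacts [le_add_of_nonneg_right hv₀, le_add_of_nonneg_left hu₀]

theorem mem_floor_div_nsmul_of_mem_closure {α : Type*} [Field α] [LinearOrder α]
    [IsStrictOrderedRing α] [FloorSemiring α]
    {G : Set α} {q : α} (hq : 0 < q) (hG : ∀ g ∈ G, g = 0 ∨ q ≤ g) {x s : α}
    (hx : x ∈ AddSubmonoid.closure G) (hxs : x ≤ s) :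
    x ∈ ⌊s / q⌋₊ • insert 0 (G ∩ Iic s) := by
  obtain ⟨k, hkx, hk⟩ := exists_mul_le_and_mem_nsmul_of_mem_closure hq.le hG hx
  have hks : k ≤ ⌊s / q⌋₊ := Nat.le_floor ((le_div_iff₀ hq).2 (hkx.trans hxs))
  have hGs : insert 0 (G ∩ Iic x) ⊆ insert 0 (G ∩ Iic s) :=
    insert_subset_insert (inter_subset_inter_right _ (Iic_subset_Iic.2 hxs))
  exact Set.nsmul_subset_nsmul hGs (mem_insert _ _) hks hk

theorem coeR_closure (S : Set ℚ) :
    coeR (AddSubmonoid.closure S) = AddSubmonoid.closure (coeR S) :=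
  congrArg SetLike.coe (AddMonoidHom.map_mclosure (Rat.castHom ℝ : ℚ →+ ℝ) S)

/-- Every increasing Puiseux monoid is nowhere dense in ℝ≥0. -/
theorem stmt18 (M : AddSubmonoid ℚ) (hM : IsIncreasing M) :
    NowhereDenseNonneg (coeR (M : Set ℚ)) := by
  obtain ⟨a, ha, ha₀, rfl⟩ := hM
  set f : ℕ → ℝ := fun n => (a n : ℝ)
  have hf : Monotone f := fun m n hmn => Rat.cast_le.2 (ha hmn)
  obtain ⟨q, hq, hfq⟩ := hf.exists_pos_forall_eq_zero_or_le fun n => Rat.cast_nonneg.2 (ha₀ n)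
  intro r s _ hrs hdense
  obtain ⟨D, hD, hDc, hfD⟩ := hf.exists_isCompact_countable_superset_range_inter_Iic s
  have hsub :
      coeR (AddSubmonoid.closure (range a)) ∩ Ioo r s ⊆ ⌊s / q⌋₊ • insert 0 D := by
    rintro x ⟨hx, -, hxs⟩
    rw [coeR_closure, coeR, ← range_comp] at hx
    exact Set.nsmul_subset_nsmul_left (insert_subset_insert hfD)
      (mem_floor_div_nsmul_of_mem_closure hq (by rintro _ ⟨n, rfl⟩; exact hfq n) hx hxs.le)
  have hIoo : Ioo r s ⊆ ⌊s / q⌋₊ • insert 0 D :=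
    hdense.trans (closure_minimal hsub ((hD.insert 0).nsmul _).isClosed)
  exact hrs.not_ge <|
    Cardinal.Real.Ioo_countable_iff.1 (((hDc.insert 0).nsmul _).mono hIoo)
end
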